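/- Let n ≥ 0 be an integer, ε > 0, and φ a C^{n+2} function on (0,∞) with φ^{(s)}(t) = O(t^{-s-ε}) as t → ∞ for s = 0,...,n+2, and lim_{t→0+} t^{s+ω} φ^{(s)}(t) = 0 for every ω > 0 and s = 0,...,n+2. Define Φ_n(t) = -d/dt[((-t)^{n+1}/n!) φ^{(n+1)}(t)]. Then for every α with 0 < α < ε, ∫_0^∞ Φ_n(t) t^α dt = -α ∏_{k=1}^n (1 + α/k) · ∫_0^∞ t^α φ'(t) dt. -/

import Mathlib

/-!
Expanding the derivative, `Φ_n(t) t^α = (-1)^n/n! ((n+1) t^(n+α) φ^(n+1)(t) + t^(n+1+α) φ^(n+2)(t))`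
on `(0, ∞)`. Integration by parts against a power of `t`, whose boundary terms vanish by the
hypotheses at `0` and at `∞`, gives `∫ t^(β+1) f' = -(β+1) ∫ t^β f`. Applied once it turns the
bracket into `-α ∫ t^(n+α) φ^(n+1)`; applied `n` more times it lowers this to
`(-1)^n ∏_{k=1}^n (k+α) ∫ t^α φ'`, and `∏_{k=1}^n (k+α) = n! ∏_{k=1}^n (1+α/k)`.
-/

open Real MeasureTheory Filter Asymptotics Set Topology

section IteratedDeriv

variable {𝕜 F : Type*} [NontriviallyNormedField 𝕜] [NormedAddCommGroup F] [NormedSpace 𝕜 F]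
  {f : 𝕜 → F} {s : Set 𝕜} {N : WithTop ℕ∞} {m : ℕ}

theorem ContDiffOn.continuousOn_iteratedDeriv_of_isOpen (hf : ContDiffOn 𝕜 N f s)
    (hs : IsOpen s) (hm : m ≤ N) : ContinuousOn (iteratedDeriv m f) s :=
  (hf.continuousOn_iteratedDerivWithin hm hs.uniqueDiffOn).congr
    (iteratedDerivWithin_of_isOpen hs).symm

theorem ContDiffOn.hasDerivAt_iteratedDeriv (hf : ContDiffOn 𝕜 N f s) (hs : IsOpen s)
    (hm : m < N) {x : 𝕜} (hx : x ∈ s) :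
    HasDerivAt (iteratedDeriv m f) (iteratedDeriv (m + 1) f x) x := by
  have hdiff : DifferentiableOn 𝕜 (iteratedDeriv m f) s :=
    (hf.differentiableOn_iteratedDerivWithin hm hs.uniqueDiffOn).congr
      (iteratedDerivWithin_of_isOpen hs).symm
  rw [iteratedDeriv_succ]
  exact ((hdiff x hx).differentiableAt (hs.mem_nhds hx)).hasDerivAt

end IteratedDeriv

theorem Asymptotics.IsBigO.rpow_mul {l : Filter ℝ} {f : ℝ → ℝ} {a β : ℝ}
    (hf : f =O[l] (· ^ a)) (hl : ∀ᶠ t in l, 0 < t) :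
    (fun t => t ^ β * f t) =O[l] (· ^ (β + a)) := by
  refine ((isBigO_refl (· ^ β) l).mul hf).congr' .rfl ?_
  filter_upwards [hl] with t ht
  exact (rpow_add ht β a).symm

theorem Asymptotics.isBigO_rpow_neg_of_tendsto_rpow_mul {l : Filter ℝ} {f : ℝ → ℝ} {c : ℝ}
    (hf : Tendsto (fun t => t ^ c * f t) l (𝓝 0)) (hl : ∀ᶠ t in l, 0 < t) :
    f =O[l] (· ^ (-c)) := by
  refine (((isBigO_refl (· ^ (-c)) l).mul (hf.isBigO_one ℝ)).congr' ?_ ?_)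
  · filter_upwards [hl] with t ht
    rw [← mul_assoc, ← rpow_add ht, neg_add_cancel, rpow_zero, one_mul]
  · simp

theorem tendsto_rpow_mul_atTop_of_isBigO {f : ℝ → ℝ} {a β : ℝ} (hf : f =O[atTop] (· ^ a))
    (h : β + a < 0) : Tendsto (fun t => t ^ β * f t) atTop (𝓝 0) := by
  have := tendsto_rpow_neg_atTop (neg_pos.2 h)
  rw [neg_neg] at this
  exact (hf.rpow_mul (eventually_gt_atTop 0)).trans_tendsto this

theorem integrableOn_Ioi_zero_of_isBigO_rpow {E : Type*} [NormedAddCommGroup E] {g : ℝ → E}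
    {a b : ℝ} (hg : ContinuousOn g (Ioi 0)) (h0 : g =O[𝓝[>] 0] (· ^ b)) (hb : -1 < b)
    (htop : g =O[atTop] (· ^ a)) (ha : a < -1) : IntegrableOn g (Ioi 0) := by
  have hm := hg.aestronglyMeasurable (μ := volume) measurableSet_Ioi
  refine integrableOn_Ioi_iff_integrableAtFilter_atTop_nhdsWithin.2
    ⟨htop.integrableAtFilter ⟨_, Ioi_mem_atTop 0, hm⟩ (integrableAtFilter_rpow_atTop_iff.2 ha),
      h0.integrableAtFilter ⟨_, self_mem_nhdsWithin, hm⟩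
        ⟨_, Ioo_mem_nhdsGT one_pos, (intervalIntegral.integrableOn_Ioo_rpow_iff one_pos).2 hb⟩,
      hg.locallyIntegrableOn measurableSet_Ioi⟩

theorem integral_Ioi_rpow_add_one_mul_deriv {f f' : ℝ → ℝ} {β : ℝ}
    (hf : ∀ x ∈ Ioi (0 : ℝ), HasDerivAt f (f' x) x)
    (hf' : IntegrableOn (fun t => t ^ (β + 1) * f' t) (Ioi 0))
    (hfβ : IntegrableOn (fun t => t ^ β * f t) (Ioi 0))
    (h0 : Tendsto (fun t => t ^ (β + 1) * f t) (𝓝[>] 0) (𝓝 0))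
    (htop : Tendsto (fun t => t ^ (β + 1) * f t) atTop (𝓝 0)) :
    ∫ t in Ioi 0, t ^ (β + 1) * f' t = -(β + 1) * ∫ t in Ioi 0, t ^ β * f t := by
  have hpow : ∀ x ∈ Ioi (0 : ℝ), HasDerivAt (· ^ (β + 1)) ((β + 1) * x ^ β) x := fun x hx => by
    simpa using hasDerivAt_rpow_const (p := β + 1) (Or.inl (ne_of_gt hx))
  have hpowf : IntegrableOn (fun t => (β + 1) * t ^ β * f t) (Ioi 0) := by
    simpa only [IntegrableOn, mul_assoc] using hfβ.const_mul (β + 1)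
  rw [integral_Ioi_mul_deriv_eq_deriv_mul hpow hf hf' hpowf h0 htop]
  simp only [mul_assoc, integral_const_mul]
  ring

theorem prod_Icc_one_add_div (n : ℕ) (α : ℝ) :
    ∏ k ∈ Finset.Icc 1 n, (1 + α / k) = (∏ k ∈ Finset.Icc 1 n, ((k : ℝ) + α)) / n.factorial := by
  induction n with
  | zero => simp
  | succ n ih =>
    rw [Finset.prod_Icc_succ_top (by omega), Finset.prod_Icc_succ_top (by omega), ih,
      Nat.factorial_succ]
    push_cast
    field_simp

theorem neg_deriv_neg_pow_div_factorial_mul_rpow {g : ℝ → ℝ} {g' t : ℝ} (n : ℕ)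
    (hg : HasDerivAt g g' t) (ht : 0 < t) (α : ℝ) :
    -deriv (fun u => (-u) ^ (n + 1) / n.factorial * g u) t * t ^ α =
      (-1) ^ n / n.factorial *
        ((n + 1) * (t ^ ((n : ℝ) + α) * g t) + t ^ (((n + 1 : ℕ) : ℝ) + α) * g') := by
  have hpow : HasDerivAt (fun u : ℝ => (-u) ^ (n + 1)) (-((n + 1) * (-t) ^ n)) t := by
    simpa using (hasDerivAt_neg t).fun_pow (n + 1)
  have hd := (hpow.div_const (n.factorial : ℝ)).fun_mul hg
  rw [hd.deriv, rpow_add ht, rpow_add ht, rpow_natCast, rpow_natCast, neg_pow t, neg_pow t]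
  ring

structure MellinAdmissible (φ : ℝ → ℝ) (N : ℕ) (ε : ℝ) : Prop where
  contDiffOn : ContDiffOn ℝ N φ (Ioi 0)
  isBigO_atTop : ∀ s : ℕ, s ≤ N →
    (fun t : ℝ => iteratedDeriv s φ t) =O[atTop] fun t : ℝ => t ^ (-(s : ℝ) - ε)
  tendsto_nhdsGT : ∀ ω : ℝ, 0 < ω → ∀ s : ℕ, s ≤ N →
    Tendsto (fun t : ℝ => t ^ ((s : ℝ) + ω) * iteratedDeriv s φ t) (𝓝[>] 0) (𝓝 0)

namespace MellinAdmissible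

variable {φ : ℝ → ℝ} {N : ℕ} {ε α : ℝ} {m : ℕ}

theorem hasDerivAt (h : MellinAdmissible φ N ε) (hm : m < N) {x : ℝ} (hx : 0 < x) :
    HasDerivAt (iteratedDeriv m φ) (iteratedDeriv (m + 1) φ x) x :=
  h.contDiffOn.hasDerivAt_iteratedDeriv isOpen_Ioi (mod_cast hm) hx

theorem integrableOn_rpow_mul_iteratedDeriv (h : MellinAdmissible φ N ε) (hm : m + 1 ≤ N)
    (hα : 0 < α) (hαε : α < ε) :
    IntegrableOn (fun t => t ^ ((m : ℝ) + α) * iteratedDeriv (m + 1) φ t) (Ioi 0) := by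
  refine integrableOn_Ioi_zero_of_isBigO_rpow (b := α / 2 - 1) (a := α - 1 - ε) ?_ ?_
    (by linarith) ?_ (by linarith)
  · exact (continuousOn_id.rpow_const fun x hx => Or.inl (ne_of_gt hx)).mul
      (h.contDiffOn.continuousOn_iteratedDeriv_of_isOpen isOpen_Ioi (mod_cast hm))
  · have := (isBigO_rpow_neg_of_tendsto_rpow_mul (h.tendsto_nhdsGT (α / 2) (by linarith) _ hm)
      self_mem_nhdsWithin).rpow_mul (β := (m : ℝ) + α) self_mem_nhdsWithin
    rwa [show (m : ℝ) + α + -(((m + 1 : ℕ) : ℝ) + α / 2) = α / 2 - 1 by push_cast; ring] at this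
  · have := (h.isBigO_atTop _ hm).rpow_mul (β := (m : ℝ) + α) (eventually_gt_atTop 0)
    rwa [show (m : ℝ) + α + (-((m + 1 : ℕ) : ℝ) - ε) = α - 1 - ε by push_cast; ring] at this

theorem integral_rpow_mul_iteratedDeriv_succ (h : MellinAdmissible φ N ε) (hm : m + 2 ≤ N)
    (hα : 0 < α) (hαε : α < ε) :
    ∫ t in Ioi 0, t ^ (((m + 1 : ℕ) : ℝ) + α) * iteratedDeriv (m + 2) φ t =
      -(((m + 1 : ℕ) : ℝ) + α) * ∫ t in Ioi 0, t ^ ((m : ℝ) + α) * iteratedDeriv (m + 1) φ t := by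
  have hβ : ((m + 1 : ℕ) : ℝ) + α = (m + α) + 1 := by push_cast; ring
  have htop := tendsto_rpow_mul_atTop_of_isBigO (h.isBigO_atTop (m + 1) (by omega))
    (β := ((m + 1 : ℕ) : ℝ) + α) (by linarith)
  rw [hβ] at htop ⊢
  refine integral_Ioi_rpow_add_one_mul_deriv (fun x hx => h.hasDerivAt (by omega) hx) ?_
    (h.integrableOn_rpow_mul_iteratedDeriv (by omega) hα hαε) ?_ htop
  · rw [← hβ]
    exact h.integrableOn_rpow_mul_iteratedDeriv hm hα hαε
  · rw [← hβ]
    exact h.tendsto_nhdsGT α hα (m + 1) (by omega)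

theorem integral_rpow_mul_iteratedDeriv_eq_prod (h : MellinAdmissible φ N ε) (hm : m + 1 ≤ N)
    (hα : 0 < α) (hαε : α < ε) :
    ∫ t in Ioi 0, t ^ ((m : ℝ) + α) * iteratedDeriv (m + 1) φ t =
      (-1) ^ m * (∏ k ∈ Finset.Icc 1 m, ((k : ℝ) + α)) * ∫ t in Ioi 0, t ^ α * deriv φ t := by
  induction m with
  | zero => simp [iteratedDeriv_one]
  | succ m ih =>
    rw [h.integral_rpow_mul_iteratedDeriv_succ hm hα hαε, ih (by omega),
      Finset.prod_Icc_succ_top (by omega)]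
    push_cast
    ring

theorem integral_neg_deriv_mul_rpow {n : ℕ} (h : MellinAdmissible φ (n + 2) ε) (hα : 0 < α)
    (hαε : α < ε) :
    ∫ t in Ioi 0, -deriv (fun u => (-u) ^ (n + 1) / n.factorial * iteratedDeriv (n + 1) φ u) t *
        t ^ α =
      -α * (-1) ^ n / n.factorial *
        ∫ t in Ioi 0, t ^ ((n : ℝ) + α) * iteratedDeriv (n + 1) φ t := by
  have hpt := fun t (ht : t ∈ Ioi (0 : ℝ)) =>
    neg_deriv_neg_pow_div_factorial_mul_rpow n (h.hasDerivAt (m := n + 1) (by omega) ht) ht α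
  rw [setIntegral_congr_fun measurableSet_Ioi hpt, integral_const_mul,
    integral_add ((h.integrableOn_rpow_mul_iteratedDeriv (by omega) hα hαε).const_mul _)
      (h.integrableOn_rpow_mul_iteratedDeriv le_rfl hα hαε),
    integral_const_mul, h.integral_rpow_mul_iteratedDeriv_succ le_rfl hα hαε]
  push_cast
  ring

end MellinAdmissible

theorem stmt16_general (n : ℕ) (ε : ℝ) (φ : ℝ → ℝ)
    (hsmooth : ContDiffOn ℝ (n + 2) φ (Set.Ioi 0))
    (hdecay : ∀ s : ℕ, s ≤ n + 2 →
      (fun t : ℝ => iteratedDeriv s φ t) =O[atTop]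
        fun t : ℝ => t ^ (-(s : ℝ) - ε))
    (hzero : ∀ ω : ℝ, 0 < ω → ∀ s : ℕ, s ≤ n + 2 →
      Tendsto (fun t : ℝ => t ^ ((s : ℝ) + ω) * iteratedDeriv s φ t)
        (nhdsWithin 0 (Set.Ioi 0)) (nhds 0))
    (Φ : ℝ → ℝ)
    (hΦ : ∀ t, Φ t =
      -deriv (fun u : ℝ => (-u) ^ (n + 1) / (Nat.factorial n) *
        iteratedDeriv (n + 1) φ u) t)
    (α : ℝ) (hα : 0 < α) (hαε : α < ε) :
    (∫ t in Set.Ioi (0:ℝ), Φ t * t ^ α) =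
      -α * (∏ k ∈ Finset.Icc 1 n, (1 + α / k)) *
        ∫ t in Set.Ioi (0:ℝ), t ^ α * deriv φ t := by
  have h : MellinAdmissible φ (n + 2) ε := ⟨by exact_mod_cast hsmooth, hdecay, hzero⟩
  have hsign : ((-1 : ℝ) ^ n) ^ 2 = 1 := by rw [← pow_mul, pow_mul', neg_one_sq, one_pow]
  simp_rw [hΦ]
  rw [h.integral_neg_deriv_mul_rpow hα hαε,
    h.integral_rpow_mul_iteratedDeriv_eq_prod (m := n) (by omega) hα hαε, prod_Icc_one_add_div]
  linear_combination (-α * (∏ k ∈ Finset.Icc 1 n, ((k : ℝ) + α)) / n.factorial *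
    ∫ t in Ioi 0, t ^ α * deriv φ t) * hsign

theorem stmt16 (n : ℕ) (ε : ℝ) (hε : 0 < ε) (φ : ℝ → ℝ)
    (hsmooth : ContDiffOn ℝ (n + 2) φ (Set.Ioi 0))
    (hdecay : ∀ s : ℕ, s ≤ n + 2 →
      (fun t : ℝ => iteratedDeriv s φ t) =O[atTop]
        fun t : ℝ => t ^ (-(s : ℝ) - ε))
    (hzero : ∀ ω : ℝ, 0 < ω → ∀ s : ℕ, s ≤ n + 2 →
      Tendsto (fun t : ℝ => t ^ ((s : ℝ) + ω) * iteratedDeriv s φ t)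
        (nhdsWithin 0 (Set.Ioi 0)) (nhds 0))
    (Φ : ℝ → ℝ)
    (hΦ : ∀ t, Φ t =
      -deriv (fun u : ℝ => (-u) ^ (n + 1) / (Nat.factorial n) *
        iteratedDeriv (n + 1) φ u) t)
    (α : ℝ) (hα : 0 < α) (hαε : α < ε) :
    (∫ t in Set.Ioi (0:ℝ), Φ t * t ^ α) =
      -α * (∏ k ∈ Finset.Icc 1 n, (1 + α / k)) *
        ∫ t in Set.Ioi (0:ℝ), t ^ α * deriv φ t :=
  stmt16_general n ε φ hsmooth hdecay hzero Φ hΦ α hα hαε
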